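/- In d variables, set w_0 = 1 and w_i = (i! / (d(d-1)···(d-i+1)))·e_i for 1 ≤ i ≤ d, where e_i is the i-th elementary symmetric polynomial. Then the operators D_- = Σ_{k=1}^d ∂_k and D_+ = Σ_{k=1}^d (-x_k² ∂_k + x_k) satisfy D_-(w_i) = i·w_{i-1}, D_+(w_i) = (d-i)·w_{i+1} for i < d, and D_+(w_d) = 0; i.e., the w_i realize the standard (d+1)-dimensional irreducible sl_2-module. -/
import Mathlib


open MvPolynomial Finset

/-- `D₋ = Σ ∂ₖ` in `d` variables. -/
noncomputable def Dm (d : ℕ) (p : MvPolynomial (Fin d) ℚ) : MvPolynomial (Fin d) ℚ :=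
  ∑ k : Fin d, pderiv k p

/-- `D₊ = Σ (-xₖ² ∂ₖ + xₖ)` in `d` variables. -/
noncomputable def Dp (d : ℕ) (p : MvPolynomial (Fin d) ℚ) : MvPolynomial (Fin d) ℚ :=
  ∑ k : Fin d, (-(X k ^ 2 * pderiv k p) + X k * p)

lemma pderiv_prod_X {d : ℕ} (k : Fin d) (t : Finset (Fin d)) :
    pderiv k (∏ i ∈ t, X i : MvPolynomial (Fin d) ℚ) =
      if k ∈ t then ∏ i ∈ t.erase k, X i else 0 := by
  induction t using Finset.induction with
  | empty => simp
  | @insert a t ha ih =>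
    rw [Finset.prod_insert ha, pderiv_mul, ih]
    rcases eq_or_ne k a with rfl | hk
    · simp [ha, pderiv_X_self]
    · rw [pderiv_X_of_ne (Ne.symm hk)]
      by_cases hkt : k ∈ t
      · simp [hk, hkt, Finset.erase_insert_of_ne hk.symm,
          Finset.prod_insert (by simp [ha] : a ∉ t.erase k)]
      · simp [hk, hkt]

lemma sum_pairs {M : Type*} [AddCommMonoid M] {d : ℕ} (m : ℕ)
    (f : Finset (Fin d) → Fin d → M) :
    ∑ t ∈ powersetCard (m+1) (univ : Finset (Fin d)), ∑ k ∈ t, f t k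
      = ∑ s ∈ powersetCard m (univ : Finset (Fin d)), ∑ k ∈ sᶜ, f (insert k s) k := by
  rw [Finset.sum_sigma', Finset.sum_sigma']
  refine Finset.sum_nbij' (fun p => ⟨p.1.erase p.2, p.2⟩) (fun p => ⟨insert p.2 p.1, p.2⟩) ?_ ?_ ?_ ?_ ?_
  · rintro ⟨t, k⟩ hp
    simp only [Finset.mem_sigma, Finset.mem_powersetCard, Finset.mem_compl] at *
    obtain ⟨⟨_, hcard⟩, hk⟩ := hp
    exact ⟨⟨Finset.subset_univ _, by rw [Finset.card_erase_of_mem hk, hcard]; omega⟩, by simp⟩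
  · rintro ⟨s, k⟩ hp
    simp only [Finset.mem_sigma, Finset.mem_powersetCard, Finset.mem_compl] at *
    obtain ⟨⟨_, hcard⟩, hk⟩ := hp
    exact ⟨⟨Finset.subset_univ _, by rw [Finset.card_insert_of_notMem hk, hcard]⟩, Finset.mem_insert_self _ _⟩
  · rintro ⟨t, k⟩ hp
    simp only [Finset.mem_sigma] at hp
    simp [Finset.insert_erase hp.2]
  · rintro ⟨s, k⟩ hp
    simp only [Finset.mem_sigma, Finset.mem_compl] at hp
    simp [Finset.erase_insert hp.2]
  · rintro ⟨t, k⟩ hp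
    simp only [Finset.mem_sigma] at hp
    simp [Finset.insert_erase hp.2]

lemma esymm_succ_eq_zero {d : ℕ} : esymm (Fin d) ℚ (d+1) = 0 := by
  rw [esymm, Finset.powersetCard_eq_empty.mpr (by simp), Finset.sum_empty]

lemma Dm_esymm (d m : ℕ) :
    Dm d (esymm (Fin d) ℚ (m+1)) = (d - m : ℕ) • esymm (Fin d) ℚ m := by
  rw [Dm, esymm]
  simp_rw [map_sum, pderiv_prod_X]
  rw [Finset.sum_comm]
  simp_rw [Finset.sum_ite_mem, Finset.univ_inter]
  rw [sum_pairs m (fun t k => ∏ i ∈ t.erase k, X i)]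
  have h : ∀ s ∈ powersetCard m (univ : Finset (Fin d)),
      (∑ k ∈ sᶜ, ∏ i ∈ (insert k s).erase k, (X i : MvPolynomial (Fin d) ℚ))
        = (d - m : ℕ) • ∏ i ∈ s, X i := by
    intro s hs
    rw [Finset.sum_congr rfl fun k hk => by
      rw [Finset.erase_insert (Finset.mem_compl.mp hk)]]
    rw [Finset.sum_const, Finset.card_compl, (Finset.mem_powersetCard.mp hs).2]
    simp
  rw [Finset.sum_congr rfl h, ← Finset.smul_sum, esymm]

lemma Dp_esymm (d m : ℕ) :
    Dp d (esymm (Fin d) ℚ m) = (m + 1) • esymm (Fin d) ℚ (m+1) := by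
  have key : ∀ (k : Fin d) (t : Finset (Fin d)),
      -(X k ^ 2 * pderiv k (∏ i ∈ t, X i)) + X k * ∏ i ∈ t, (X i : MvPolynomial (Fin d) ℚ)
        = if k ∈ tᶜ then ∏ i ∈ insert k t, X i else 0 := by
    intro k t
    rw [pderiv_prod_X]
    by_cases h : k ∈ t
    · rw [if_pos h, if_neg (by simpa using h), sq, mul_assoc, Finset.mul_prod_erase _ _ h]
      ring
    · rw [if_neg h, if_pos (Finset.mem_compl.mpr h), Finset.prod_insert h]
      simp
  rw [Dp]
  have expand : ∀ k : Fin d,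
      (-(X k ^ 2 * pderiv k (esymm (Fin d) ℚ m)) + X k * esymm (Fin d) ℚ m)
        = ∑ t ∈ powersetCard m (univ : Finset (Fin d)),
            if k ∈ tᶜ then ∏ i ∈ insert k t, (X i : MvPolynomial (Fin d) ℚ) else 0 := by
    intro k
    rw [esymm, map_sum, Finset.mul_sum, Finset.mul_sum, ← Finset.sum_neg_distrib,
      ← Finset.sum_add_distrib]
    exact Finset.sum_congr rfl fun t _ => key k t
  rw [Finset.sum_congr rfl fun k _ => expand k, Finset.sum_comm]
  simp_rw [Finset.sum_ite_mem, Finset.univ_inter]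
  rw [← sum_pairs m (fun t _ => ∏ i ∈ t, X i), esymm, Finset.smul_sum]
  refine Finset.sum_congr rfl fun t ht => ?_
  rw [Finset.sum_const, (Finset.mem_powersetCard.mp ht).2]

lemma Dm_smul (d : ℕ) (c : ℚ) (p : MvPolynomial (Fin d) ℚ) :
    Dm d (c • p) = c • Dm d p := by
  simp [Dm, Finset.smul_sum, map_smul]

lemma Dp_smul (d : ℕ) (c : ℚ) (p : MvPolynomial (Fin d) ℚ) :
    Dp d (c • p) = c • Dp d p := by
  simp [Dp, Finset.smul_sum, map_smul, mul_smul_comm, smul_add, smul_neg]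

lemma scalar_key (d m : ℕ) (hm : m < d) :
    ((m+1).factorial : ℚ) / (d.descFactorial (m+1) : ℚ) * ((d - m : ℕ) : ℚ)
      = ((m+1 : ℕ) : ℚ) * ((m.factorial : ℚ) / (d.descFactorial m : ℚ)) := by
  have h1 : (d.descFactorial (m+1) : ℚ) = ((d - m : ℕ) : ℚ) * (d.descFactorial m : ℚ) := by
    rw [Nat.descFactorial_succ]; push_cast; ring
  have h2 : ((d - m : ℕ) : ℚ) ≠ 0 := by
    simp only [ne_eq, Nat.cast_eq_zero]; omega
  have h3 : (d.descFactorial m : ℚ) ≠ 0 := by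
    simp only [ne_eq, Nat.cast_eq_zero]
    intro h
    rw [Nat.descFactorial_eq_zero_iff_lt] at h
    omega
  rw [Nat.factorial_succ, h1]
  push_cast
  field_simp

/-- `wᵢ = (i! / (d(d-1)⋯(d-i+1)))·eᵢ`, where `d(d-1)⋯(d-i+1) = d.descFactorial i`. -/
noncomputable def wbasis (d i : ℕ) : MvPolynomial (Fin d) ℚ :=
  ((i.factorial : ℚ) / (d.descFactorial i : ℚ)) • esymm (Fin d) ℚ i

/-- The `wᵢ` realize the standard `(d+1)`-dimensional irreducible `sl₂`-module:
`D₋(wᵢ) = i·w_{i-1}`, `D₊(wᵢ) = (d-i)·w_{i+1}` for `i < d`, and `D₊(w_d) = 0`. -/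
theorem wbasis_sl2 (d : ℕ) :
    (∀ i : ℕ, 1 ≤ i → i ≤ d → Dm d (wbasis d i) = (i : ℚ) • wbasis d (i - 1)) ∧
    (∀ i : ℕ, i < d → Dp d (wbasis d i) = ((d - i : ℕ) : ℚ) • wbasis d (i + 1)) ∧
    Dp d (wbasis d d) = 0 := by
  refine ⟨?_, ?_, ?_⟩
  · intro i h1 hd
    obtain ⟨m, rfl⟩ : ∃ m, i = m + 1 := ⟨i - 1, by omega⟩
    rw [wbasis, Dm_smul, Dm_esymm, Nat.add_sub_cancel, wbasis,
      ← Nat.cast_smul_eq_nsmul ℚ, smul_smul, smul_smul,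
      scalar_key d m (by omega)]
  · intro i hi
    rw [wbasis, Dp_smul, Dp_esymm, wbasis,
      ← Nat.cast_smul_eq_nsmul ℚ, smul_smul, smul_smul]
    congr 1
    have := scalar_key d i hi
    push_cast at this ⊢
    linarith [this]
  · rw [wbasis, Dp_smul, Dp_esymm, esymm_succ_eq_zero, smul_zero, smul_zero]
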